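/- Let X be a normal variety over an algebraically closed field, E_1,…,E_l distinct prime divisors on X, and D a ℚ-Weil divisor. If the set V = {x ∈ ℝ^l : Σ x_i E_i ∼_ℝ D} is nonempty, then V is an affine subspace of ℝ^l defined over ℚ (i.e., V = x' + V_0 with x' ∈ ℚ^l and V_0 a linear subspace spanned by rational vectors). -/

import Mathlib

/-!
Every `ℚ`-linear map `f : ℝ → ℝ`, applied coordinatewise, preserves the real span of integral
divisors, since `f (c * n) = f c * n` for `n ∈ ℤ`. Applying a `ℚ`-linear retraction `ℝ → ℚ` to a
point of `V` gives a rational point of `V`, since `D` is rational. The direction of `V` is then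
stable under all the coordinate functionals of a `ℚ`-basis of `ℝ`, and expanding a vector in
such a basis writes it as a real combination of rational vectors of the direction.
-/

open Finsupp

/-- The image in `P →₀ ℝ` of an integral divisor. -/
noncomputable def intDiv {P : Type} (s : P →₀ ℤ) : P →₀ ℝ :=
  s.mapRange (Int.cast : ℤ → ℝ) (by simp)

/-- The image in `P →₀ ℝ` of a rational divisor. -/
noncomputable def ratDiv {P : Type} (s : P →₀ ℚ) : P →₀ ℝ :=
  s.mapRange (Rat.cast : ℚ → ℝ) (by simp)

lemma Real.exists_rat_retraction : ∃ π : ℝ →ₗ[ℚ] ℚ, ∀ q : ℚ, π q = q := by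
  obtain ⟨π, hπ⟩ := (Algebra.linearMap ℚ ℝ).exists_leftInverse_of_injective
    (LinearMap.ker_eq_bot.mpr (algebraMap ℚ ℝ).injective)
  exact ⟨π, fun q => LinearMap.congr_fun hπ q⟩

lemma setOf_sub_mem_eq_add_comap {R U N : Type*} [Ring R] [AddCommGroup U] [Module R U]
    [AddCommGroup N] [Module R N] (φ : U →ₗ[R] N) (M : Submodule R N) (d : N) {x' : U}
    (hx' : φ x' - d ∈ M) :
    {x | φ x - d ∈ M} = {x | ∃ v ∈ M.comap φ, x = x' + v} := by
  ext x
  constructor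
  · intro hx
    refine ⟨x - x', ?_, by abel⟩
    simpa [map_sub] using M.sub_mem hx hx'
  · rintro ⟨v, hv, rfl⟩
    rw [Set.mem_ofPred_eq, map_add, add_sub_right_comm]
    exact M.add_mem hx' hv

theorem Submodule.span_rat_points_eq {ι : Type*} [Fintype ι] (W : Submodule ℝ (ι → ℝ))
    (hW : ∀ f : ℝ →ₗ[ℚ] ℝ, ∀ v ∈ W, ⇑f ∘ v ∈ W) :
    span ℝ ((fun w : ι → ℚ => fun i => (w i : ℝ)) '' {w | (fun i => (w i : ℝ)) ∈ W}) = W := by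
  refine le_antisymm (span_le.mpr ?_) fun v hv => ?_
  · rintro _ ⟨w, hw, rfl⟩
    exact hw
  set B := Module.Basis.ofVectorSpace ℚ ℝ
  set F := Finset.univ.biUnion fun i => (B.repr (v i)).support
  have hv_expand : v = ∑ b ∈ F, B b • fun i => ((B.repr (v i) b : ℚ) : ℝ) := by
    funext i
    have hsupp : (B.repr (v i)).support ⊆ F := fun b hb =>
      Finset.mem_biUnion.mpr ⟨i, Finset.mem_univ i, hb⟩
    conv_lhs => rw [← B.linearCombination_repr (v i)]
    rw [linearCombination_apply, sum_of_support_subset _ hsupp _ (by simp), Finset.sum_apply]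
    refine Finset.sum_congr rfl fun b _ => ?_
    rw [Rat.smul_def, Pi.smul_apply, smul_eq_mul, mul_comm]
  rw [hv_expand]
  refine sum_mem fun b _ => smul_mem _ _ (subset_span ⟨_, ?_, rfl⟩)
  exact hW ((Algebra.linearMap ℚ ℝ).comp (B.coord b)) v hv

section Divisors

variable {P : Type}

@[simp]
lemma intDiv_apply (s : P →₀ ℤ) (p : P) : intDiv s p = s p := rfl

lemma mapRange_smul_intDiv (f : ℝ →ₗ[ℚ] ℝ) (c : ℝ) (s : P →₀ ℤ) :
    (c • intDiv s).mapRange f f.map_zero = f c • intDiv s := by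
  ext p
  rw [mapRange_apply, Finsupp.smul_apply, Finsupp.smul_apply, intDiv_apply, smul_eq_mul,
    smul_eq_mul, mul_comm, ← zsmul_eq_mul, map_zsmul, zsmul_eq_mul, mul_comm]

lemma mapRange_mem_span_intDiv (f : ℝ →ₗ[ℚ] ℝ) {A : Set (P →₀ ℤ)} {m : P →₀ ℝ}
    (hm : m ∈ Submodule.span ℝ (intDiv '' A)) :
    m.mapRange f f.map_zero ∈ Submodule.span ℝ (intDiv '' A) := by
  obtain ⟨n, c, g, rfl⟩ := Submodule.mem_span_set'.mp hm
  rw [mapRange_finsetSum]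
  refine Submodule.sum_mem _ fun i _ => ?_
  obtain ⟨s, hs, hgs⟩ := (g i).2
  rw [← hgs, mapRange_smul_intDiv]
  exact Submodule.smul_mem _ _ (Submodule.subset_span ⟨s, hs, rfl⟩)

lemma mapRange_ratDiv (f : ℝ →ₗ[ℚ] ℝ) (hf : ∀ q : ℚ, f q = q) (D : P →₀ ℚ) :
    (ratDiv D).mapRange f f.map_zero = ratDiv D := by
  ext p
  exact hf (D p)

variable {ι : Type*} [Fintype ι]

noncomputable def divisorCombination (E : ι → P) : (ι → ℝ) →ₗ[ℝ] (P →₀ ℝ) :=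
  ∑ i, (lsingle (E i)).comp (LinearMap.proj i)

lemma divisorCombination_apply (E : ι → P) (x : ι → ℝ) :
    divisorCombination E x = ∑ i, single (E i) (x i) := by
  simp [divisorCombination, LinearMap.sum_apply]

lemma mapRange_divisorCombination (f : ℝ →ₗ[ℚ] ℝ) (E : ι → P) (x : ι → ℝ) :
    (divisorCombination E x).mapRange f f.map_zero = divisorCombination E (⇑f ∘ x) := by
  simp only [divisorCombination_apply, mapRange_finsetSum, mapRange_single, Function.comp_apply]

end Divisors

theorem rlinear_equivalence_locus_is_rational_affine_subspace_general
    {P : Type}                      -- the set of prime divisors of the normal variety `X`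
    (S : AddSubgroup (P →₀ ℤ))      -- the subgroup of principal (Weil) divisors `(f)`, `f ∈ k(X)^×`
    {l : ℕ} (E : Fin l → P)         -- distinct primes `E_1, …, E_l`
    (D : P →₀ ℚ)                    -- a ℚ-Weil divisor
    (V : Set (Fin l → ℝ))
    (hV : V = {x | (∑ i, Finsupp.single (E i) (x i)) - ratDiv D ∈
        Submodule.span ℝ (intDiv '' (S : Set (P →₀ ℤ)))})
    (hne : V.Nonempty) :
    ∃ x' ∈ V, (∀ i, ∃ q : ℚ, x' i = (q : ℝ)) ∧
      ∃ T : Set (Fin l → ℚ),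
        V = {x | ∃ v ∈ Submodule.span ℝ ((fun w : Fin l → ℚ => fun i => ((w i : ℝ))) '' T),
          x = x' + v} := by
  set M := Submodule.span ℝ (intDiv '' (S : Set (P →₀ ℤ)))
  set W := M.comap (divisorCombination E)
  replace hV : V = {x | divisorCombination E x - ratDiv D ∈ M} := by
    simp only [hV, divisorCombination_apply]
  have hW : ∀ f : ℝ →ₗ[ℚ] ℝ, ∀ x ∈ W, ⇑f ∘ x ∈ W := fun f x hx =>
    (mapRange_divisorCombination f E x).subst (motive := (· ∈ M)) (mapRange_mem_span_intDiv f hx)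
  obtain ⟨x₀, hx₀⟩ := hne
  obtain ⟨π, hπ⟩ := Real.exists_rat_retraction
  set f := (Algebra.linearMap ℚ ℝ).comp π
  have hx' : divisorCombination E (⇑f ∘ x₀) - ratDiv D ∈ M := by
    rw [hV] at hx₀
    have := mapRange_mem_span_intDiv f hx₀
    rwa [mapRange_sub (map_sub f), mapRange_divisorCombination,
      mapRange_ratDiv f (fun q => by simp [f, hπ])] at this
  refine ⟨_, hV ▸ hx', fun i => ⟨π (x₀ i), rfl⟩, {w | (fun i => (w i : ℝ)) ∈ W}, ?_⟩
  rw [Submodule.span_rat_points_eq W hW, hV]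
  exact setOf_sub_mem_eq_add_comap _ M _ hx'

theorem rlinear_equivalence_locus_is_rational_affine_subspace
    {P : Type}                      -- the set of prime divisors of the normal variety `X`
    (S : AddSubgroup (P →₀ ℤ))      -- the subgroup of principal (Weil) divisors `(f)`, `f ∈ k(X)^×`
    {l : ℕ} (E : Fin l → P) (hE : Function.Injective E)   -- distinct primes `E_1, …, E_l`
    (D : P →₀ ℚ)                    -- a ℚ-Weil divisor
    (V : Set (Fin l → ℝ))
    (hV : V = {x | (∑ i, Finsupp.single (E i) (x i)) - ratDiv D ∈
        Submodule.span ℝ (intDiv '' (S : Set (P →₀ ℤ)))})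
    (hne : V.Nonempty) :
    ∃ x' ∈ V, (∀ i, ∃ q : ℚ, x' i = (q : ℝ)) ∧
      ∃ T : Set (Fin l → ℚ),
        V = {x | ∃ v ∈ Submodule.span ℝ ((fun w : Fin l → ℚ => fun i => ((w i : ℝ))) '' T),
          x = x' + v} :=
  rlinear_equivalence_locus_is_rational_affine_subspace_general S E D V hV hne
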